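/- arXiv:1503.03819 — 2 statements merged into one kernel-verified Lean document; each statement's English description precedes it below -/
import Mathlib

section
/- Let t ≥ 1 and let a < b be real numbers. Then, as λ → 0⁺ with λ ∈ (0,1), the probability ℙ( X i ≤ t·log(1/λ) for every integer i with ⌊a·m_λ⌋ ≤ i ≤ ⌊b·m_λ⌋ ) tends to 1. -/
open MeasureTheory ProbabilityTheory Filter

/-- The intermediate space scale `m_λ = ⌊1/(λ·(log(1/λ))²)⌋`. -/
noncomputable def mLam (l : ℝ) : ℤ := ⌊1 / (l * (Real.log (1 / l)) ^ 2)⌋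

open Topology Finset Real

/-! A union bound suffices: each of the `O(m_λ)` sites is still empty at time `t·log(1/λ)` with
probability `e^{-t log(1/λ)} ≤ λ`, and `m_λ · λ ≤ 1/(log(1/λ))² → 0`. -/

lemma card_Icc_floor_le {x y : ℝ} (hxy : x ≤ y) : ((Icc ⌊x⌋ ⌊y⌋).card : ℝ) ≤ y - x + 2 := by
  rw [Int.card_Icc]
  rcases le_or_gt (⌊y⌋ + 1 - ⌊x⌋) 0 with hk | hk
  · rw [Int.toNat_of_nonpos hk]
    push_cast
    linarith
  · rw [← Int.cast_natCast, Int.toNat_of_nonneg hk.le]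
    push_cast
    linarith [Int.floor_le y, Int.lt_floor_add_one x]

lemma log_one_div_pos {l : ℝ} (hl : l ∈ Set.Ioo 0 1) : 0 < log (1 / l) :=
  log_pos (one_lt_one_div hl.1 hl.2)

lemma exp_neg_mul_log_one_div_le {l t : ℝ} (hl : l ∈ Set.Ioo 0 1) (ht : 1 ≤ t) :
    exp (-(t * log (1 / l))) ≤ l := by
  have hlog : log (1 / l) ≤ t * log (1 / l) :=
    le_mul_of_one_le_left (log_one_div_pos hl).le ht
  calc exp (-(t * log (1 / l))) ≤ exp (-log (1 / l)) := exp_le_exp.2 (neg_le_neg hlog)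
    _ = l := by rw [one_div, log_inv, neg_neg, exp_log hl.1]

lemma mLam_nonneg {l : ℝ} (hl : l ∈ Set.Ioo 0 1) : (0 : ℝ) ≤ mLam l := by
  have : (0 : ℤ) ≤ mLam l := Int.floor_nonneg.2 (by have := hl.1; positivity)
  exact_mod_cast this

lemma mLam_mul_le {l : ℝ} (hl : l ∈ Set.Ioo 0 1) : (mLam l : ℝ) * l ≤ (log (1 / l) ^ 2)⁻¹ :=
  calc (mLam l : ℝ) * l ≤ 1 / (l * log (1 / l) ^ 2) * l :=
        mul_le_mul_of_nonneg_right (Int.floor_le _) hl.1.le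
    _ = (log (1 / l) ^ 2)⁻¹ := by
        have := log_one_div_pos hl
        field_simp [hl.1.ne']

lemma tendsto_log_one_div_nhdsWithin_Ioo :
    Tendsto (fun l : ℝ => log (1 / l)) (𝓝[Set.Ioo 0 1] 0) atTop := by
  simp only [one_div]
  exact tendsto_log_atTop.comp
    (tendsto_inv_nhdsGT_zero.mono_left (nhdsWithin_mono 0 Set.Ioo_subset_Ioi_self))

lemma tendsto_card_Icc_floor_mul_mLam_mul {a b : ℝ} (hab : a ≤ b) :
    Tendsto (fun l => ((Icc ⌊a * (mLam l : ℝ)⌋ ⌊b * (mLam l : ℝ)⌋).card : ℝ) * l)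
      (𝓝[Set.Ioo 0 1] 0) (𝓝 0) := by
  have hlim : Tendsto (fun l : ℝ => (b - a) * (log (1 / l) ^ 2)⁻¹ + 2 * l)
      (𝓝[Set.Ioo 0 1] 0) (𝓝 0) := by
    have hinv := tendsto_inv_atTop_zero.comp
      ((tendsto_pow_atTop two_ne_zero).comp tendsto_log_one_div_nhdsWithin_Ioo)
    have hid : Tendsto (fun l : ℝ => l) (𝓝[Set.Ioo 0 1] 0) (𝓝 0) := nhdsWithin_le_nhds
    simpa using (tendsto_const_nhds.mul hinv).add (tendsto_const_nhds.mul hid)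
  refine squeeze_zero' ?_ ?_ hlim <;> filter_upwards [self_mem_nhdsWithin] with l hl
  · exact mul_nonneg (Nat.cast_nonneg _) hl.1.le
  have hcard := card_Icc_floor_le (mul_le_mul_of_nonneg_right hab (mLam_nonneg hl))
  calc _ ≤ (b * mLam l - a * mLam l + 2) * l := mul_le_mul_of_nonneg_right hcard hl.1.le
    _ = (b - a) * (mLam l * l) + 2 * l := by ring
    _ ≤ _ := by linarith [mul_le_mul_of_nonneg_left (mLam_mul_le hl) (sub_nonneg.2 hab)]

section Measure

variable {Ω : Type*} [MeasurableSpace Ω] {μ : Measure Ω}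

lemma measure_biUnion_finset_le_card_mul {ι : Type*} {E : ι → Set Ω} {p : ENNReal}
    (S : Finset ι) (h : ∀ i ∈ S, μ (E i) ≤ p) : μ (⋃ i ∈ S, E i) ≤ S.card * p :=
  (measure_biUnion_finset_le S E).trans ((sum_le_card_nsmul S _ p h).trans_eq (nsmul_eq_mul _ _))

lemma tendsto_measure_of_tendsto_measure_compl [IsProbabilityMeasure μ] {α : Type*}
    {f : Filter α} {s : α → Set Ω} (h : Tendsto (fun x => μ (s x)ᶜ) f (𝓝 0)) :
    Tendsto (fun x => μ (s x)) f (𝓝 1) := by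
  have hsub : Tendsto (fun x => 1 - μ (s x)ᶜ) f (𝓝 1) := by
    simpa using ENNReal.Tendsto.sub tendsto_const_nhds h (Or.inl ENNReal.one_ne_top)
  refine tendsto_of_tendsto_of_tendsto_of_le_of_le hsub tendsto_const_nhds (fun x => ?_)
    (fun x => prob_le_one)
  rw [tsub_le_iff_right]
  simpa [measure_univ] using measure_union_le (μ := μ) (s x) (s x)ᶜ

end Measure

theorem statement5_general
    {Ω : Type*} [MeasurableSpace Ω] (μ : Measure Ω) [IsProbabilityMeasure μ]
    (X : ℤ → Ω → ℝ)
    (hexp : ∀ (i : ℤ) (s : ℝ), 0 ≤ s → μ {ω | s < X i ω} = ENNReal.ofReal (Real.exp (-s)))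
    (t a b : ℝ) (ht : 1 ≤ t) (hab : a < b) :
    Tendsto
      (fun l : ℝ =>
        μ {ω | ∀ i : ℤ, ⌊a * (mLam l : ℝ)⌋ ≤ i → i ≤ ⌊b * (mLam l : ℝ)⌋ →
            X i ω ≤ t * Real.log (1 / l)})
      (nhdsWithin 0 (Set.Ioo 0 1)) (nhds 1) := by
  refine tendsto_measure_of_tendsto_measure_compl ?_
  have hbound := ENNReal.tendsto_ofReal (tendsto_card_Icc_floor_mul_mLam_mul hab.le)
  rw [ENNReal.ofReal_zero] at hbound
  refine tendsto_of_tendsto_of_tendsto_of_le_of_le' tendsto_const_nhds hbound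
    (Eventually.of_forall fun _ => bot_le) ?_
  filter_upwards [self_mem_nhdsWithin] with l hl
  set S := Icc ⌊a * (mLam l : ℝ)⌋ ⌊b * (mLam l : ℝ)⌋
  have hs : 0 ≤ t * log (1 / l) := mul_nonneg (by linarith) (log_one_div_pos hl).le
  have hcompl : {ω | ∀ i : ℤ, ⌊a * (mLam l : ℝ)⌋ ≤ i → i ≤ ⌊b * (mLam l : ℝ)⌋ →
      X i ω ≤ t * log (1 / l)}ᶜ ⊆ ⋃ i ∈ S, {ω | t * log (1 / l) < X i ω} := by
    intro ω hω
    simp only [Set.mem_compl_iff, Set.mem_ofPred_eq, not_forall, not_le] at hω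
    obtain ⟨i, hai, hib, hXi⟩ := hω
    exact Set.mem_biUnion (mem_Icc.2 ⟨hai, hib⟩) hXi
  calc _ ≤ μ (⋃ i ∈ S, {ω | t * log (1 / l) < X i ω}) := measure_mono hcompl
    _ ≤ S.card * ENNReal.ofReal l := measure_biUnion_finset_le_card_mul S fun i _ =>
        (hexp i _ hs).trans_le (ENNReal.ofReal_le_ofReal (exp_neg_mul_log_one_div_le hl ht))
    _ = ENNReal.ofReal (S.card * l) := by
        rw [ENNReal.ofReal_mul (Nat.cast_nonneg _), ENNReal.ofReal_natCast]

theorem statement5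
    {Ω : Type*} [MeasurableSpace Ω] (μ : Measure Ω) [IsProbabilityMeasure μ]
    (X : ℤ → Ω → ℝ) (hmeas : ∀ i, Measurable (X i))
    (hindep : iIndepFun X μ)
    (hexp : ∀ (i : ℤ) (s : ℝ), 0 ≤ s → μ {ω | s < X i ω} = ENNReal.ofReal (Real.exp (-s)))
    (t a b : ℝ) (ht : 1 ≤ t) (hab : a < b) :
    Tendsto
      (fun l : ℝ =>
        μ {ω | ∀ i : ℤ, ⌊a * (mLam l : ℝ)⌋ ≤ i → i ≤ ⌊b * (mLam l : ℝ)⌋ →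
            X i ω ≤ t * Real.log (1 / l)})
      (nhdsWithin 0 (Set.Ioo 0 1)) (nhds 1) :=
  statement5_general μ X hexp t a b ht hab
end

section
/- Fix z0 ∈ [0,1], α ∈ (0,1), t > z0 + α, and real numbers a > 0 and b > 0. For λ ∈ (0,1) set m_λ^α = ⌊α/(λ^(α+(1−α)·z0)·log(1/λ))⌋. Then, as λ → 0⁺ with λ ∈ (0,1), the probability ℙ( X i ≤ t·log(1/λ) for every integer i with −⌊a·m_λ^α⌋ ≤ i ≤ ⌊b·m_λ^α⌋ ) tends to 1. -/
/-!
By a union bound, the probability that some site of the zone is still empty at time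
`t·log(1/λ)` is at most the number of sites, `(|a| + |b|)·m + 1` with
`m ≤ α / (λ^β · log(1/λ))` and `β = α + (1 − α)·z0`, times `ℙ(X i > t·log(1/λ)) = λ^t`.
This is `O(λ^(t−β) / log(1/λ) + λ^t)`, which tends to `0` because `β ≤ z0 + α < t`.
-/

open MeasureTheory ProbabilityTheory Filter

/-- The slow-regime space scale `m_λ^α = ⌊α/(λ^(α+(1−α)·z0)·log(1/λ))⌋`. -/
noncomputable def mLamAlpha (z0 α l : ℝ) : ℤ :=
  ⌊α / (l ^ (α + (1 - α) * z0) * Real.log (1 / l))⌋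

open Set Topology Real
open scoped ENNReal

lemma one_sub_card_mul_le_measure_forall_le {ι Ω : Type*} [MeasurableSpace Ω] (μ : Measure Ω)
    [IsProbabilityMeasure μ] (X : ι → Ω → ℝ) (s : Finset ι) (c : ℝ) {p : ℝ≥0∞}
    (hp : ∀ i ∈ s, μ {ω | c < X i ω} ≤ p) :
    1 - s.card * p ≤ μ {ω | ∀ i ∈ s, X i ω ≤ c} := by
  set late := ⋃ i ∈ s, {ω | c < X i ω}
  have hunion : μ late ≤ s.card * p := calc
    μ late ≤ ∑ i ∈ s, μ {ω | c < X i ω} := measure_biUnion_finset_le _ _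
    _ ≤ ∑ _i ∈ s, p := Finset.sum_le_sum hp
    _ = s.card * p := by rw [Finset.sum_const, nsmul_eq_mul]
  have hcompl : {ω | ∀ i ∈ s, X i ω ≤ c} = lateᶜ := by ext; simp [late]
  calc 1 - s.card * p ≤ 1 - μ late := tsub_le_tsub_left hunion _
    _ ≤ μ lateᶜ := tsub_le_iff_left.2 (measure_univ (μ := μ) ▸ measure_univ_le_add_compl late)
    _ = μ {ω | ∀ i ∈ s, X i ω ≤ c} := by rw [hcompl]

lemma card_Icc_neg_floor_floor_le (a b : ℝ) {m : ℝ} (hm : 0 ≤ m) :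
    ((Finset.Icc (-⌊a * m⌋) ⌊b * m⌋).card : ℝ) ≤ (|a| + |b|) * m + 1 := by
  rw [Int.card_Icc, ← Int.cast_natCast, Int.toNat_eq_max]
  push_cast
  have ha : (⌊a * m⌋ : ℝ) ≤ |a| * m :=
    (Int.floor_le _).trans (mul_le_mul_of_nonneg_right (le_abs_self a) hm)
  have hb : (⌊b * m⌋ : ℝ) ≤ |b| * m :=
    (Int.floor_le _).trans (mul_le_mul_of_nonneg_right (le_abs_self b) hm)
  exact max_le (by linarith) (by positivity)

lemma mLamAlpha_nonneg {z0 α l : ℝ} (hα : 0 ≤ α) (hl : l ∈ Ioo 0 1) : 0 ≤ mLamAlpha z0 α l := by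
  have hlog : 0 < log (1 / l) := log_pos (one_lt_one_div hl.1 hl.2)
  exact Int.floor_nonneg.2 (div_nonneg hα (mul_pos (rpow_pos_of_pos hl.1 _) hlog).le)

lemma mLamAlpha_le (z0 α l : ℝ) :
    (mLamAlpha z0 α l : ℝ) ≤ α / (l ^ (α + (1 - α) * z0) * log (1 / l)) :=
  Int.floor_le _

lemma exp_neg_mul_log_one_div {l : ℝ} (hl : 0 < l) (t : ℝ) : exp (-(t * log (1 / l))) = l ^ t := by
  rw [rpow_def_of_pos hl, one_div, log_inv]
  ring_nf

lemma tendsto_rpow_nhdsGT_zero {c : ℝ} (hc : 0 < c) :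
    Tendsto (fun l : ℝ => l ^ c) (𝓝[>] 0) (𝓝 0) := by
  simpa [zero_rpow hc.ne'] using
    (continuousAt_rpow_const 0 c (Or.inr hc.le)).tendsto.mono_left nhdsWithin_le_nhds

lemma tendsto_rpow_div_rpow_mul_log_nhdsGT_zero {β t : ℝ} (hβt : β < t) :
    Tendsto (fun l => l ^ t / (l ^ β * log (1 / l))) (𝓝[>] 0) (𝓝 0) := by
  have hpow : Tendsto (fun l : ℝ => l ^ (t - β)) (𝓝[>] 0) (𝓝 0) :=
    tendsto_rpow_nhdsGT_zero (sub_pos.2 hβt)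
  have hlog : Tendsto (fun l : ℝ => (log (1 / l))⁻¹) (𝓝[>] 0) (𝓝 0) := by
    simp only [one_div, log_inv]
    exact (tendsto_neg_atBot_atTop.comp tendsto_log_nhdsGT_zero).inv_tendsto_atTop
  refine (zero_mul (0 : ℝ) ▸ hpow.mul hlog).congr' ?_
  filter_upwards [self_mem_nhdsWithin] with l (hl : 0 < l)
  rw [rpow_sub hl, div_mul_eq_div_div, div_eq_mul_inv (_ / _)]

lemma one_sub_le_measure_all_seeded {Ω : Type*} [MeasurableSpace Ω] (μ : Measure Ω)
    [IsProbabilityMeasure μ] (X : ℤ → Ω → ℝ)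
    (hexp : ∀ (i : ℤ) (s : ℝ), 0 ≤ s → μ {ω | s < X i ω} = ENNReal.ofReal (exp (-s)))
    {z0 α t a b l : ℝ} (hα : 0 ≤ α) (ht : 0 ≤ t) (hl : l ∈ Ioo 0 1) :
    1 - ENNReal.ofReal
        ((|a| + |b|) * α * (l ^ t / (l ^ (α + (1 - α) * z0) * log (1 / l))) + l ^ t) ≤
      μ {ω | ∀ i : ℤ, -⌊a * (mLamAlpha z0 α l : ℝ)⌋ ≤ i → i ≤ ⌊b * (mLamAlpha z0 α l : ℝ)⌋ →
        X i ω ≤ t * log (1 / l)} := by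
  set zone := Finset.Icc (-⌊a * (mLamAlpha z0 α l : ℝ)⌋) ⌊b * (mLamAlpha z0 α l : ℝ)⌋
  have hc : 0 ≤ t * log (1 / l) := mul_nonneg ht (log_nonneg (one_le_one_div hl.1 hl.2.le))
  have htail : ∀ i ∈ zone, μ {ω | t * log (1 / l) < X i ω} ≤ ENNReal.ofReal (l ^ t) := fun i _ =>
    (hexp i _ hc).trans_le (by rw [exp_neg_mul_log_one_div hl.1])
  have hm : (0 : ℝ) ≤ mLamAlpha z0 α l := by exact_mod_cast mLamAlpha_nonneg hα hl
  have hpow : 0 ≤ l ^ t := rpow_nonneg hl.1.le t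
  have hcard : (zone.card : ℝ) * l ^ t ≤
      (|a| + |b|) * α * (l ^ t / (l ^ (α + (1 - α) * z0) * log (1 / l))) + l ^ t := calc
    (zone.card : ℝ) * l ^ t ≤ ((|a| + |b|) * (mLamAlpha z0 α l : ℝ) + 1) * l ^ t :=
      mul_le_mul_of_nonneg_right (card_Icc_neg_floor_floor_le a b hm) hpow
    _ ≤ ((|a| + |b|) * (α / (l ^ (α + (1 - α) * z0) * log (1 / l))) + 1) * l ^ t := by
      gcongr
      exact mLamAlpha_le z0 α l
    _ = _ := by ring
  calc 1 - ENNReal.ofReal _ ≤ 1 - zone.card * ENNReal.ofReal (l ^ t) := by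
        gcongr
        rw [← ENNReal.ofReal_natCast, ← ENNReal.ofReal_mul (Nat.cast_nonneg _)]
        exact ENNReal.ofReal_le_ofReal hcard
    _ ≤ μ {ω | ∀ i ∈ zone, X i ω ≤ t * log (1 / l)} :=
        one_sub_card_mul_le_measure_forall_le μ X zone _ htail
    _ = _ := by simp only [zone, Finset.mem_Icc, and_imp]

theorem statement7_general
    {Ω : Type*} [MeasurableSpace Ω] (μ : Measure Ω) [IsProbabilityMeasure μ]
    (X : ℤ → Ω → ℝ)
    (hexp : ∀ (i : ℤ) (s : ℝ), 0 ≤ s → μ {ω | s < X i ω} = ENNReal.ofReal (Real.exp (-s)))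
    (z0 α t a b : ℝ) (hz0 : 0 ≤ z0) (hα0 : 0 < α)
    (ht : z0 + α < t) :
    Tendsto
      (fun l : ℝ =>
        μ {ω | ∀ i : ℤ,
            -⌊a * (mLamAlpha z0 α l : ℝ)⌋ ≤ i → i ≤ ⌊b * (mLamAlpha z0 α l : ℝ)⌋ →
            X i ω ≤ t * Real.log (1 / l)})
      (nhdsWithin 0 (Set.Ioo 0 1)) (nhds 1) := by
  have hβt : α + (1 - α) * z0 < t := by nlinarith
  have ht0 : 0 < t := by linarith
  rw [nhdsWithin_Ioo_eq_nhdsGT zero_lt_one]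
  have hexpected : Tendsto (fun l => (|a| + |b|) * α *
      (l ^ t / (l ^ (α + (1 - α) * z0) * log (1 / l))) + l ^ t) (𝓝[>] 0) (𝓝 0) := by
    simpa only [mul_zero, add_zero] using
      ((tendsto_rpow_div_rpow_mul_log_nhdsGT_zero hβt).const_mul ((|a| + |b|) * α)).add
        (tendsto_rpow_nhdsGT_zero ht0)
  have hlower := ENNReal.Tendsto.sub tendsto_const_nhds (ENNReal.tendsto_ofReal hexpected)
    (Or.inl ENNReal.one_ne_top)
  rw [ENNReal.ofReal_zero, tsub_zero] at hlower
  refine tendsto_of_tendsto_of_tendsto_of_le_of_le' hlower tendsto_const_nhds ?_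
    (Eventually.of_forall fun _ => prob_le_one)
  filter_upwards [Ioo_mem_nhdsGT zero_lt_one] with l hl
  exact one_sub_le_measure_all_seeded μ X hexp hα0.le ht0.le hl

theorem statement7
    {Ω : Type*} [MeasurableSpace Ω] (μ : Measure Ω) [IsProbabilityMeasure μ]
    (X : ℤ → Ω → ℝ) (hmeas : ∀ i, Measurable (X i))
    (hindep : iIndepFun X μ)
    (hexp : ∀ (i : ℤ) (s : ℝ), 0 ≤ s → μ {ω | s < X i ω} = ENNReal.ofReal (Real.exp (-s)))
    (z0 α t a b : ℝ) (hz0 : 0 ≤ z0) (hz1 : z0 ≤ 1) (hα0 : 0 < α) (hα1 : α < 1)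
    (ht : z0 + α < t) (ha : 0 < a) (hb : 0 < b) :
    Tendsto
      (fun l : ℝ =>
        μ {ω | ∀ i : ℤ,
            -⌊a * (mLamAlpha z0 α l : ℝ)⌋ ≤ i → i ≤ ⌊b * (mLamAlpha z0 α l : ℝ)⌋ →
            X i ω ≤ t * Real.log (1 / l)})
      (nhdsWithin 0 (Set.Ioo 0 1)) (nhds 1) :=
  statement7_general μ X hexp z0 α t a b hz0 hα0 ht
end
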